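/- Every f ∈ Θ_{k,n} has length ℓ(f) ≥ gcd(k,n) - 1, and this bound is attained: the element f_{k,n} s_1 s_2 ⋯ s_{gcd(k,n)-1} belongs to Θ_{k,n} and has length gcd(k,n) - 1, where f_{k,n}(i) = i + k. -/

import Mathlib

open Finset

/-- `f : ℤ → ℤ` is an `n`-periodic affine permutation. -/
def IsAffinePerm (n : ℕ) (f : ℤ → ℤ) : Prop :=
  Function.Bijective f ∧ ∀ i : ℤ, f (i + (n : ℤ)) = f i + (n : ℤ)

/-- Boundedness condition `i ≤ f i ≤ i + n`. -/
def IsBoundedFn (n : ℕ) (f : ℤ → ℤ) : Prop :=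
  ∀ i : ℤ, i ≤ f i ∧ f i ≤ i + (n : ℤ)

/-- Bounded affine permutation. -/
def IsBAP (n : ℕ) (f : ℤ → ℤ) : Prop := IsAffinePerm n f ∧ IsBoundedFn n f

/-- The orbit of the residue of `a` under the reduction of `f` modulo `n`. -/
def orbitF (n : ℕ) (f : ℤ → ℤ) (a : ℤ) : Finset ℤ :=
  (Finset.range n).image (fun r => (f^[r] a) % (n : ℤ))

/-- The reduction of `f` modulo `n` is an `n`-cycle. -/
def IsCycleMod (n : ℕ) (f : ℤ → ℤ) : Prop :=
  ∀ j : ℤ, ∃ r : ℕ, r < n ∧ (f^[r] 0) % (n : ℤ) = j % (n : ℤ)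

/-- The winding number `k(f̄) = #{i ∈ [1,n] : f̄(i) < i} = #{i ∈ [1,n] : f(i) > n}`. -/
noncomputable def winding (n : ℕ) (f : ℤ → ℤ) : ℕ :=
  ((Finset.Icc (1 : ℤ) (n : ℤ)).filter (fun i => (n : ℤ) < f i)).card

/-- `f ∈ Θ_{k,n}`: a bounded affine permutation whose reduction modulo `n`
is an `n`-cycle with winding number `k`. -/
def IsTheta (k n : ℕ) (f : ℤ → ℤ) : Prop :=
  IsBAP n f ∧ IsCycleMod n f ∧ winding n f = k

/-- Inversions of `f`: pairs `i < j` with `f(i) > f(j)` and `i ∈ [n]`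
(for a bounded affine permutation all inversions lie in the indicated box). -/
noncomputable def inversions (n : ℕ) (f : ℤ → ℤ) : Finset (ℤ × ℤ) :=
  ((Finset.Icc (1 : ℤ) (n : ℤ)) ×ˢ (Finset.Icc (1 : ℤ) (3 * (n : ℤ)))).filter
    (fun p => p.1 < p.2 ∧ f p.2 < f p.1)

/-- The length `ℓ(f)`, i.e. the number of inversions. -/
noncomputable def alen (n : ℕ) (f : ℤ → ℤ) : ℕ := (inversions n f).card

/-- The number of cycles of the reduction of `f` modulo `n`. -/
def numCycles (n : ℕ) (f : ℤ → ℤ) : ℕ :=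
  ((Finset.range n).image (fun a : ℕ => orbitF n f (a : ℤ))).card

/-- The affine simple transposition `s_i`, swapping `i + rn` and `i + 1 + rn` for all `r`. -/
def sT (n : ℕ) (i : ℤ) (j : ℤ) : ℤ :=
  if j % (n : ℤ) = i % (n : ℤ) then j + 1
  else if j % (n : ℤ) = (i + 1) % (n : ℤ) then j - 1
  else j

/-- `s_i f`. -/
def mulS (n : ℕ) (i : ℤ) (f : ℤ → ℤ) : ℤ → ℤ := fun m => sT n i (f m)

/-- `f s_i`. -/
def smulS (n : ℕ) (i : ℤ) (f : ℤ → ℤ) : ℤ → ℤ := fun m => f (sT n i m)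

/-- `s_i f s_i`. -/
def conjS (n : ℕ) (i : ℤ) (f : ℤ → ℤ) : ℤ → ℤ := fun m => sT n i (f (sT n i m))

/-- The cyclic shift `σ`. -/
def cshift (f : ℤ → ℤ) : ℤ → ℤ := fun i => f (i - 1) + 1

/-- Resolving the crossing `(i,j)`: swap the values `f(i)` and `f(j)` `n`-periodically. -/
def resolve (n : ℕ) (f : ℤ → ℤ) (i j : ℤ) : ℤ → ℤ := fun m =>
  if m % (n : ℤ) = i % (n : ℤ) then f j + (m - i)
  else if m % (n : ℤ) = j % (n : ℤ) then f i + (m - j)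
  else f m

/-- `g'` is the order-preserving relabeling (by `ℤ`, `n'`-periodically) of the
restriction of `g` to the set `S` of integers. -/
def IsRelabelOn (n : ℕ) (g : ℤ → ℤ) (S : Set ℤ) (n' : ℕ) (g' : ℤ → ℤ) : Prop :=
  ∃ φ : ℤ → ℤ, StrictMono φ ∧ (∀ m : ℤ, φ (m + (n' : ℤ)) = φ m + (n : ℤ)) ∧
    Set.range φ = S ∧ ∀ m : ℤ, g (φ m) = φ (g' m)

/-- The parameters `(k₁, n₁)` of the cycle of `g` through `a`:
`n₁` is the size of the orbit of the residue of `a`, and `k₁` is the winding number of the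
permutation obtained by order-preserving relabeling of the restriction of `g`
to the integers whose residue lies in that orbit. -/
noncomputable def resParamsAt (n : ℕ) (g : ℤ → ℤ) (a : ℤ) : ℕ × ℕ :=
  (sInf {k₁ : ℕ | ∃ g₁ : ℤ → ℤ,
      IsRelabelOn n g {m : ℤ | m % (n : ℤ) ∈ orbitF n g a} (orbitF n g a).card g₁ ∧
      winding (orbitF n g a).card g₁ = k₁},
   (orbitF n g a).card)

/-- The inversion multiset `F'(f)`: one point `(k₁, n₁)` for each inversion `(i,j)`,
recording the parameters of the cycle through `i` after resolving the crossing. -/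
noncomputable def invMultiset (n : ℕ) (f : ℤ → ℤ) : Multiset (ℕ × ℕ) :=
  Multiset.map (fun p => resParamsAt n (resolve n f p.1 p.2) p.1) (inversions n f).val

/-- The inversion multiset `F(f)` in `(k, n-k)`-coordinates: points `(k₁, n₁ - k₁)`. -/
noncomputable def invMultisetF (n : ℕ) (f : ℤ → ℤ) : Multiset (ℕ × ℕ) :=
  Multiset.map (fun p => (p.1, p.2 - p.1)) (invMultiset n f)

/-- `f` is repetition-free if its inversion multiset has no repeated elements. -/
def RepFree (n : ℕ) (f : ℤ → ℤ) : Prop := (invMultiset n f).Nodup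

/-- A double crossing at `i`: with `a = f⁻¹(i+1)`, `b = f⁻¹(i)`, `c = f(i+1)`, `d = f(i)`,
we have `a < b < i < i+1 < c < d`. -/
def DoubleCrossingAt (n : ℕ) (f : ℤ → ℤ) (i : ℤ) : Prop :=
  ∃ a b : ℤ, f a = i + 1 ∧ f b = i ∧ a < b ∧ b < i ∧ i + 1 < f (i + 1) ∧ f (i + 1) < f i

/-- `i` and `j` lie in the same cycle of the reduction of `f` modulo `n`. -/
def SameCycleMod (n : ℕ) (f : ℤ → ℤ) (i j : ℤ) : Prop :=
  j % (n : ℤ) ∈ orbitF n f i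

/-- The recurrence defining the positroid Catalan numbers `C_f`. -/
structure CatalanRules (C : (n : ℕ) → (ℤ → ℤ) → ℕ) : Prop where
  base : ∀ f : ℤ → ℤ, IsBAP 1 f → C 1 f = 1
  fix_removal : ∀ (n n' : ℕ) (f f' : ℤ → ℤ), IsBAP n f → IsBAP n' f' →
    IsRelabelOn n f {m : ℤ | f m ≠ m ∧ f m ≠ m + (n : ℤ)} n' f' → C n f = C n' f'
  mul_left : ∀ (n : ℕ) (f : ℤ → ℤ) (i : ℤ), 2 ≤ n → IsBAP n f →
    (f i = i + 1 ∨ f (i + 1) = i + (n : ℤ)) → C n f = C n (mulS n i f)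
  mul_right : ∀ (n : ℕ) (f : ℤ → ℤ) (i : ℤ), 2 ≤ n → IsBAP n f →
    (f i = i + 1 ∨ f (i + 1) = i + (n : ℤ)) → C n f = C n (smulS n i f)
  conj_inv : ∀ (n : ℕ) (f : ℤ → ℤ) (i : ℤ), IsBAP n f → IsBAP n (conjS n i f) →
    alen n (conjS n i f) = alen n f → C n (conjS n i f) = C n f
  double_same : ∀ (n : ℕ) (f : ℤ → ℤ) (i : ℤ), IsBAP n f → DoubleCrossingAt n f i →
    SameCycleMod n f i (i + 1) → C n (conjS n i f) = C n (mulS n i f) + C n f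
  double_diff : ∀ (n : ℕ) (f : ℤ → ℤ) (i : ℤ), IsBAP n f → DoubleCrossingAt n f i →
    ¬ SameCycleMod n f i (i + 1) → C n (conjS n i f) = C n f

/-- The value `f^r(0)` for `r ∈ ℤ` (using `f^n(0) = kn` to extend periodically). -/
def bigPt (n k : ℕ) (f : ℤ → ℤ) (r : ℤ) : ℤ :=
  f^[(r % (n : ℤ)).toNat] 0 + (r / (n : ℤ)) * ((k : ℤ) * (n : ℤ))

/-- The big path `P_∞` of `f`: the piecewise-linear path through the points
`(r, f^r(0)/n)` for `r ∈ ℤ` (horizontal coordinate `r`, vertical `f^r(0)/n`). -/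
def bigPath (n k : ℕ) (f : ℤ → ℤ) : Set (ℝ × ℝ) :=
  ⋃ r : ℤ, segment ℝ ((r : ℝ), (bigPt n k f r : ℝ) / (n : ℝ))
    ((r : ℝ) + 1, (bigPt n k f (r + 1) : ℝ) / (n : ℝ))

/-- The small path `P^{(f)}`: the piecewise-linear path through the points
`(r, f^r(0)/n)` for `r = 0, 1, …, n`. -/
def smallPath (n : ℕ) (f : ℤ → ℤ) : Set (ℝ × ℝ) :=
  ⋃ r ∈ Finset.range n, segment ℝ ((r : ℝ), ((f^[r] 0 : ℤ) : ℝ) / (n : ℝ))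
    ((r : ℝ) + 1, ((f^[r + 1] 0 : ℤ) : ℝ) / (n : ℝ))

/-- The number of up steps among the first `t` steps of `s`. -/
def upsTo (n : ℕ) (s : Fin n → Bool) (t : ℕ) : ℕ :=
  (Finset.univ.filter (fun r : Fin n => r.val < t ∧ s r = true)).card

/-- The number of lattice paths from `(0,0)` to `(k, n-k)` with unit up and right steps
(`n` steps in total, recorded by `s : Fin n → Bool`, `true` = up) which stay above the
main diagonal of the `k × (n-k)` rectangle and avoid every point of `F`
(points recorded as `(height, horizontal position)`). -/
noncomputable def dyckCount (k n : ℕ) (F : Multiset (ℕ × ℕ)) : ℕ :=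
  Nat.card {s : Fin n → Bool //
    upsTo n s n = k ∧
    (∀ t ≤ n, k * (t - upsTo n s t) ≤ (n - k) * upsTo n s t) ∧
    (∀ t ≤ n, (upsTo n s t, t - upsTo n s t) ∉ F)}

/-- The product `s_1 s_2 ⋯ s_t` as a function `ℤ → ℤ`. -/
def sChain (n : ℕ) : ℕ → (ℤ → ℤ)
  | 0 => id
  | t + 1 => fun m => sChain n t (sT n ((t : ℤ) + 1) m)

/-!
Write `c(f)` for the number of cycles of `f` modulo `n`. For every bounded affine permutation `f`
of winding number `k`, `gcd(k, n) ≤ ℓ(f) + c(f)`, by induction on `ℓ(f)`. If `f` has no descent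
in `[1, n]`, it is the translation `f_{k,n}`, whose cycles are the `gcd(k, n)` classes modulo
`gcd(k, n)`. At a descent `i`, `f s_i` is again bounded, has smaller length and at most one more
cycle, and keeps the winding number, because `n k = ∑_{i=1}^n (f(i) - i)` is additive under
composition and vanishes on `s_i`. On `Θ_{k,n}` we have `c(f) = 1`.

In `f_{k,n} s_1 ⋯ s_t` the points `t + 1` and `t + 2` lie in different cycles, since the cycle of
`t + 2` is still a class modulo `gcd(k, n)`; so each further `s_{t+1}` merges two cycles, and
`f_{k,n} s_1 ⋯ s_{gcd(k,n)-1}` is an `n`-cycle. Its only inversions are the pairs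
`(p, gcd(k, n))` with `1 ≤ p < gcd(k, n)`.
-/

variable {n : ℕ} {f g : ℤ → ℤ}

theorem not_modEq_add_one (hn : 2 ≤ n) (x : ℤ) : ¬ x ≡ x + 1 [ZMOD n] := fun h => by
  have := Int.le_of_dvd one_pos (by simpa using h.dvd)
  omega

def modIcc (n : ℕ) (x : ℤ) : ℤ := (x - 1) % n + 1

theorem eq_of_modEq_of_lt {x y : ℤ} (h : x ≡ y [ZMOD n]) (h1 : x < y + n) (h2 : y < x + n) :
    x = y := by
  have := Int.eq_zero_of_abs_lt_dvd h.dvd (abs_lt.2 ⟨by omega, by omega⟩)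
  omega

theorem emod_add_eq_of_emod_eq {m r c : ℤ} (h : m % n = r) (h0 : 0 ≤ r + c) (h1 : r + c < n) :
    (m + c) % n = r + c := by
  have hn : (0 : ℤ) < n := by omega
  have := Int.emod_nonneg m hn.ne'
  have := Int.emod_lt_of_pos m hn
  have hr : m ≡ r [ZMOD n] := by
    rw [Int.ModEq, h, Int.emod_eq_of_lt (by omega) (by omega)]
  rw [hr.add_right c, Int.emod_eq_of_lt h0 h1]

theorem modIcc_mem (hn : 0 < n) (x : ℤ) : 1 ≤ modIcc n x ∧ modIcc n x ≤ n := by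
  have := Int.emod_nonneg (x - 1) (b := n) (by omega)
  have := Int.emod_lt_of_pos (x - 1) (b := n) (by omega)
  constructor <;> unfold modIcc <;> omega

theorem dvd_sub_modIcc (x : ℤ) : (n : ℤ) ∣ x - modIcc n x :=
  ⟨(x - 1) / n, by have := Int.emod_add_mul_ediv (x - 1) n; unfold modIcc; linarith⟩

theorem modIcc_modEq (x : ℤ) : modIcc n x ≡ x [ZMOD n] :=
  Int.modEq_iff_dvd.2 (dvd_sub_modIcc x)

theorem modIcc_of_mem {x : ℤ} (h1 : 1 ≤ x) (h2 : x ≤ n) : modIcc n x = x := by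
  unfold modIcc; rw [Int.emod_eq_of_lt (by omega) (by omega)]; ring

theorem modIcc_add_self (x : ℤ) : modIcc n (x + n) = modIcc n x := by
  unfold modIcc
  rw [show x + n - 1 = x - 1 + n by ring, Int.add_emod_right]

namespace IsAffinePerm

theorem apply_add_mul (hf : IsAffinePerm n f) (x t : ℤ) : f (x + t * n) = f x + t * n := by
  induction t using Int.induction_on with
  | zero => simp
  | succ t ih => rw [add_mul, one_mul, ← add_assoc, hf.2, ih]; ring
  | pred t ih =>
    have := hf.2 (x + (-t - 1) * n)
    rw [show x + (-t - 1) * n + n = x + -t * n by ring, ih] at this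
    linarith

theorem apply_eq_of_dvd (hf : IsAffinePerm n f) {x y : ℤ} (h : (n : ℤ) ∣ y - x) :
    f y = f x + (y - x) := by
  obtain ⟨t, ht⟩ := h
  rw [show y = x + t * n by linarith, hf.apply_add_mul]
  ring

theorem apply_modEq (hf : IsAffinePerm n f) {x y : ℤ} (h : x ≡ y [ZMOD n]) :
    f x ≡ f y [ZMOD n] :=
  Int.modEq_iff_dvd.2 (by rw [hf.apply_eq_of_dvd h.dvd, add_sub_cancel_left]; exact h.dvd)

theorem modEq_of_apply_modEq (hf : IsAffinePerm n f) {x y : ℤ} (h : f x ≡ f y [ZMOD n]) :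
    x ≡ y [ZMOD n] := by
  obtain ⟨t, ht⟩ := h.dvd
  rw [hf.1.1 (show f y = f (x + t * n) by rw [hf.apply_add_mul]; linarith)]
  exact (Int.add_mul_emod_self_right x t n).symm

theorem comp (hf : IsAffinePerm n f) (hg : IsAffinePerm n g) : IsAffinePerm n (f ∘ g) :=
  ⟨hf.1.comp hg.1, fun i => by simp [hg.2, hf.2]⟩

theorem apply_add_one_sub_apply (hf : IsAffinePerm n f) {i j : ℤ} (h : j ≡ i [ZMOD n]) :
    f (j + 1) - f j = f (i + 1) - f i := by
  have e1 := hf.apply_eq_of_dvd h.dvd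
  have e2 := hf.apply_eq_of_dvd (x := j + 1) (y := i + 1) (by simpa using h.dvd)
  omega

theorem iterate (hf : IsAffinePerm n f) : ∀ r : ℕ, IsAffinePerm n f^[r]
  | 0 => ⟨Function.bijective_id, fun _ => rfl⟩
  | r + 1 => (hf.iterate r).comp hf

theorem iterate_modEq_iterate (hg : IsAffinePerm n g) {y : ℤ} {r : ℕ}
    (h : ∀ s < r, g (f^[s] y) ≡ f (f^[s] y) [ZMOD n]) : g^[r] y ≡ f^[r] y [ZMOD n] := by
  induction r with
  | zero => rfl
  | succ r ih =>
    rw [Function.iterate_succ_apply', Function.iterate_succ_apply']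
    exact (hg.apply_modEq (ih fun s hs => h s (by omega))).trans (h r (by omega))

end IsAffinePerm

theorem isAffinePerm_add_const (c : ℤ) : IsAffinePerm n (· + c) :=
  ⟨(Equiv.addRight c).bijective, fun _ => by ring⟩

section Orbits

variable {x y : ℤ}

theorem IsAffinePerm.exists_iterate_modEq_self (hn : 0 < n) (hf : IsAffinePerm n f) (x : ℤ) :
    ∃ p, 0 < p ∧ p ≤ n ∧ f^[p] x ≡ x [ZMOD n] := by
  have hmaps : Set.MapsTo (fun r => f^[r] x % n) (range (n + 1) : Set ℕ) (Ico (0 : ℤ) n) :=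
    fun r _ => by
      simp only [coe_Ico, Set.mem_Ico]
      exact ⟨Int.emod_nonneg _ (by omega), Int.emod_lt_of_pos _ (by omega)⟩
  obtain ⟨r, hr, s, hs, hrs, heq⟩ :=
    exists_ne_map_eq_of_card_lt_of_maps_to (by simp) hmaps
  rw [mem_range] at hr hs
  wlog hlt : r < s generalizing r s
  · exact this s hs r hr hrs.symm heq.symm (by omega)
  refine ⟨s - r, by omega, by omega, (hf.iterate r).modEq_of_apply_modEq ?_⟩
  rw [← Function.iterate_add_apply, Nat.add_sub_cancel' hlt.le]
  exact heq.symm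

theorem IsAffinePerm.iterate_mul_modEq (hf : IsAffinePerm n f) {p : ℕ}
    (hp : f^[p] x ≡ x [ZMOD n]) (m : ℕ) : f^[p * m] x ≡ x [ZMOD n] := by
  induction m with
  | zero => rfl
  | succ m ih =>
    rw [Nat.mul_succ, Function.iterate_add_apply]
    exact ((hf.iterate _).apply_modEq hp).trans ih

theorem mem_orbitF_iff (hn : 0 < n) (hf : IsAffinePerm n f) :
    y ∈ orbitF n f x ↔ ∃ r : ℕ, f^[r] x % n = y := by
  refine ⟨fun h => by obtain ⟨r, -, hr⟩ := mem_image.1 h; exact ⟨r, hr⟩, fun ⟨r, hr⟩ => ?_⟩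
  obtain ⟨p, hp0, hpn, hp⟩ := hf.exists_iterate_modEq_self hn x
  refine mem_image.2 ⟨r % p, mem_range.2 (by have := Nat.mod_lt r hp0; omega), ?_⟩
  have := (hf.iterate (r % p)).apply_modEq (hf.iterate_mul_modEq hp (r / p))
  rw [← Function.iterate_add_apply, Nat.mod_add_div] at this
  rw [← hr]
  exact this.symm

theorem mem_orbitF_self (hn : 0 < n) (x : ℤ) : x % n ∈ orbitF n f x :=
  mem_image.2 ⟨0, mem_range.2 hn, rfl⟩

theorem orbitF_congr (hf : IsAffinePerm n f) (h : x ≡ y [ZMOD n]) :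
    orbitF n f x = orbitF n f y :=
  image_congr fun r _ => (hf.iterate r).apply_modEq h

theorem mem_orbitF_comm (hn : 0 < n) (hf : IsAffinePerm n f) (h : y % n ∈ orbitF n f x) :
    x % n ∈ orbitF n f y := by
  obtain ⟨r, hr⟩ := (mem_orbitF_iff hn hf).1 h
  obtain ⟨_ | q, hp0, -, hp⟩ := hf.exists_iterate_modEq_self hn x
  · omega
  refine (mem_orbitF_iff hn hf).2 ⟨q * r, ?_⟩
  have := hf.iterate_mul_modEq hp r
  rw [Nat.succ_mul, Function.iterate_add_apply] at this
  exact ((hf.iterate _).apply_modEq hr).symm.trans this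

theorem orbitF_subset_of_mem (hn : 0 < n) (hf : IsAffinePerm n f) (h : y % n ∈ orbitF n f x) :
    orbitF n f y ⊆ orbitF n f x := fun z hz => by
  obtain ⟨s, hs⟩ := (mem_orbitF_iff hn hf).1 h
  obtain ⟨r, rfl⟩ := (mem_orbitF_iff hn hf).1 hz
  refine (mem_orbitF_iff hn hf).2 ⟨r + s, ?_⟩
  rw [Function.iterate_add_apply]
  exact (hf.iterate r).apply_modEq hs

theorem orbitF_eq_of_mem (hn : 0 < n) (hf : IsAffinePerm n f) (h : y % n ∈ orbitF n f x) :
    orbitF n f y = orbitF n f x :=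
  (orbitF_subset_of_mem hn hf h).antisymm (orbitF_subset_of_mem hn hf (mem_orbitF_comm hn hf h))

theorem orbitF_eq_of_forall_modEq (hg : IsAffinePerm n g)
    (h : ∀ r : ℕ, g (f^[r] x) ≡ f (f^[r] x) [ZMOD n]) : orbitF n g x = orbitF n f x :=
  image_congr fun _ _ => hg.iterate_modEq_iterate fun s _ => h s

def orbitSet (n : ℕ) (f : ℤ → ℤ) : Finset (Finset ℤ) :=
  (range n).image fun a : ℕ => orbitF n f a

theorem numCycles_eq_card_orbitSet : numCycles n f = (orbitSet n f).card := rfl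

theorem orbitF_mem_orbitSet (hn : 0 < n) (hf : IsAffinePerm n f) (x : ℤ) :
    orbitF n f x ∈ orbitSet n f := by
  have h0 := Int.emod_nonneg x (b := n) (by omega)
  refine mem_image.2 ⟨(x % n).toNat, mem_range.2 ?_, orbitF_congr hf ?_⟩
  · have := Int.emod_lt_of_pos x (b := n) (by omega); omega
  · rw [Int.toNat_of_nonneg h0]; exact Int.emod_emod x n

theorem mem_orbitSet_iff {O : Finset ℤ} (hn : 0 < n) (hf : IsAffinePerm n f) :
    O ∈ orbitSet n f ↔ ∃ x : ℤ, orbitF n f x = O :=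
  ⟨fun h => by obtain ⟨a, -, rfl⟩ := mem_image.1 h; exact ⟨a, rfl⟩,
    fun ⟨x, hx⟩ => hx ▸ orbitF_mem_orbitSet hn hf x⟩

theorem isCycleMod_iff_numCycles_le_one (hn : 0 < n) (hf : IsAffinePerm n f) :
    IsCycleMod n f ↔ numCycles n f ≤ 1 := by
  have key : IsCycleMod n f ↔ ∀ j : ℤ, j % n ∈ orbitF n f 0 := by
    refine forall_congr' fun j => ?_
    simp [orbitF, eq_comm]
  rw [key, numCycles_eq_card_orbitSet, card_le_one]
  constructor
  · intro h O hO O' hO'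
    obtain ⟨x, rfl⟩ := (mem_orbitSet_iff hn hf).1 hO
    obtain ⟨x', rfl⟩ := (mem_orbitSet_iff hn hf).1 hO'
    rw [orbitF_eq_of_mem hn hf (h x), orbitF_eq_of_mem hn hf (h x')]
  · intro h j
    rw [h _ (orbitF_mem_orbitSet hn hf 0) _ (orbitF_mem_orbitSet hn hf j)]
    exact mem_orbitF_self hn j

end Orbits

section Transposition

variable {i j : ℤ}

theorem sT_of_modEq (h : j ≡ i [ZMOD n]) : sT n i j = j + 1 := if_pos h

theorem sT_of_modEq_add_one (h1 : ¬ j ≡ i [ZMOD n]) (h2 : j ≡ i + 1 [ZMOD n]) :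
    sT n i j = j - 1 :=
  (if_neg h1).trans (if_pos h2)

theorem sT_of_not_modEq (h1 : ¬ j ≡ i [ZMOD n]) (h2 : ¬ j ≡ i + 1 [ZMOD n]) : sT n i j = j :=
  (if_neg h1).trans (if_neg h2)

theorem sT_cases (i j : ℤ) :
    (j ≡ i [ZMOD n] ∧ sT n i j = j + 1) ∨
    (¬ j ≡ i [ZMOD n] ∧ j ≡ i + 1 [ZMOD n] ∧ sT n i j = j - 1) ∨
    (¬ j ≡ i [ZMOD n] ∧ ¬ j ≡ i + 1 [ZMOD n] ∧ sT n i j = j) := by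
  by_cases h1 : j ≡ i [ZMOD n]
  · exact Or.inl ⟨h1, sT_of_modEq h1⟩
  by_cases h2 : j ≡ i + 1 [ZMOD n]
  · exact Or.inr (Or.inl ⟨h1, h2, sT_of_modEq_add_one h1 h2⟩)
  · exact Or.inr (Or.inr ⟨h1, h2, sT_of_not_modEq h1 h2⟩)

theorem sT_add_one_of_modEq (hn : 2 ≤ n) (h : j ≡ i [ZMOD n]) : sT n i (j + 1) = j := by
  rw [sT_of_modEq_add_one (fun h' => not_modEq_add_one hn j (h.trans h'.symm)) (h.add_right 1)]
  ring

theorem sT_sT (hn : 2 ≤ n) (i j : ℤ) : sT n i (sT n i j) = j := by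
  rcases sT_cases (n := n) i j with ⟨h1, h⟩ | ⟨h1, h2, h⟩ | ⟨h1, h2, h⟩ <;> rw [h]
  · exact sT_add_one_of_modEq hn h1
  · rw [sT_of_modEq (Int.ModEq.add_right_cancel' 1 (by rwa [sub_add_cancel]))]
    ring
  · exact sT_of_not_modEq h1 h2

theorem isAffinePerm_sT (hn : 2 ≤ n) (i : ℤ) : IsAffinePerm n (sT n i) := by
  refine ⟨Function.Involutive.bijective (sT_sT hn i), fun j => ?_⟩
  have h : j + n ≡ j [ZMOD n] := Int.add_emod_right j n
  rcases sT_cases (n := n) i j with ⟨h1, h'⟩ | ⟨h1, h2, h'⟩ | ⟨h1, h2, h'⟩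
  · rw [h', sT_of_modEq (h.trans h1)]; ring
  · rw [h', sT_of_modEq_add_one (fun h3 => h1 (h.symm.trans h3)) (h.trans h2)]; ring
  · rw [h', sT_of_not_modEq (fun h3 => h1 (h.symm.trans h3)) (fun h3 => h2 (h.symm.trans h3))]

theorem sT_lt_sT (hn : 2 ≤ n) {p q : ℤ} (hpq : p < q) (h : ¬ (p ≡ i [ZMOD n] ∧ q = p + 1)) :
    sT n i p < sT n i q := by
  rcases sT_cases (n := n) i p with ⟨hp1, hp⟩ | ⟨-, -, hp⟩ | ⟨hp1, -, hp⟩ <;>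
    rcases sT_cases (n := n) i q with ⟨-, hq⟩ | ⟨-, hq2, hq⟩ | ⟨-, -, hq⟩ <;> rw [hp, hq]
  all_goals first | omega | skip
  · have : q ≠ p + 2 := by
      rintro rfl
      rw [show p + 2 = p + 1 + 1 by ring] at hq2
      exact not_modEq_add_one hn (p + 1) ((hp1.add_right 1).trans hq2.symm)
    have : q ≠ p + 1 := fun h' => h ⟨hp1, h'⟩
    omega
  · have : q ≠ p + 1 := fun h' => h ⟨hp1, h'⟩
    omega
  · have : q ≠ p + 1 := by
      rintro rfl
      exact hp1 (Int.ModEq.add_right_cancel' 1 hq2)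
    omega

theorem isAffinePerm_smulS (hn : 2 ≤ n) (hf : IsAffinePerm n f) (i : ℤ) :
    IsAffinePerm n (smulS n i f) :=
  hf.comp (isAffinePerm_sT hn i)

theorem smulS_smulS (hn : 2 ≤ n) (i : ℤ) (f : ℤ → ℤ) : smulS n i (smulS n i f) = f :=
  funext fun j => congrArg f (sT_sT hn i j)

theorem smulS_apply_of_not_modEq (h1 : ¬ j ≡ i [ZMOD n]) (h2 : ¬ j ≡ i + 1 [ZMOD n]) :
    smulS n i f j = f j :=
  congrArg f (sT_of_not_modEq h1 h2)

end Transposition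

section CycleCount

variable {i : ℤ}

theorem orbitF_smulS_of_not_mem (hn : 2 ≤ n) (hf : IsAffinePerm n f) {x : ℤ}
    (ha : i % n ∉ orbitF n f x) (hb : (i + 1) % n ∉ orbitF n f x) :
    orbitF n (smulS n i f) x = orbitF n f x :=
  orbitF_eq_of_forall_modEq (isAffinePerm_smulS hn hf i) fun r => by
    rw [smulS_apply_of_not_modEq (fun h => ha ((mem_orbitF_iff (by omega) hf).2 ⟨r, h⟩))
      (fun h => hb ((mem_orbitF_iff (by omega) hf).2 ⟨r, h⟩))]

theorem numCycles_eq_card_filter_add_card_pair (hn : 0 < n) (hf : IsAffinePerm n f) (a b : ℤ) :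
    numCycles n f = ((orbitSet n f).filter fun O => a % n ∉ O ∧ b % n ∉ O).card +
      ({orbitF n f a, orbitF n f b} : Finset _).card := by
  rw [numCycles_eq_card_orbitSet, ← card_filter_add_card_filter_not (s := orbitSet n f)
    (fun O => a % n ∉ O ∧ b % n ∉ O)]
  congr 2
  ext O
  simp only [mem_filter, mem_insert, mem_singleton, not_and_or, not_not]
  constructor
  · rintro ⟨hO, h | h⟩ <;> obtain ⟨x, rfl⟩ := (mem_orbitSet_iff hn hf).1 hO
    · exact Or.inl (orbitF_eq_of_mem hn hf h).symm
    · exact Or.inr (orbitF_eq_of_mem hn hf h).symm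
  · rintro (rfl | rfl)
    · exact ⟨orbitF_mem_orbitSet hn hf a, Or.inl (mem_orbitF_self hn a)⟩
    · exact ⟨orbitF_mem_orbitSet hn hf b, Or.inr (mem_orbitF_self hn b)⟩

theorem filter_orbitSet_smulS_subset (hn : 2 ≤ n) (hf : IsAffinePerm n f) (i : ℤ) :
    (orbitSet n (smulS n i f)).filter (fun O => i % n ∉ O ∧ (i + 1) % n ∉ O) ⊆
      (orbitSet n f).filter (fun O => i % n ∉ O ∧ (i + 1) % n ∉ O) := by
  intro O hO
  rw [mem_filter] at hO ⊢
  obtain ⟨hO, ha, hb⟩ := hO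
  have hf' := isAffinePerm_smulS hn hf i
  obtain ⟨x, rfl⟩ := (mem_orbitSet_iff (by omega) hf').1 hO
  have := orbitF_smulS_of_not_mem hn hf' ha hb
  rw [smulS_smulS hn] at this
  exact ⟨this ▸ orbitF_mem_orbitSet (by omega) hf x, ha, hb⟩

theorem filter_orbitSet_smulS (hn : 2 ≤ n) (hf : IsAffinePerm n f) (i : ℤ) :
    (orbitSet n (smulS n i f)).filter (fun O => i % n ∉ O ∧ (i + 1) % n ∉ O) =
      (orbitSet n f).filter (fun O => i % n ∉ O ∧ (i + 1) % n ∉ O) := by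
  refine (filter_orbitSet_smulS_subset hn hf i).antisymm ?_
  simpa only [smulS_smulS hn] using
    filter_orbitSet_smulS_subset hn (isAffinePerm_smulS hn hf i) i

theorem numCycles_smulS_le (hn : 2 ≤ n) (hf : IsAffinePerm n f) (i : ℤ) :
    numCycles n (smulS n i f) ≤ numCycles n f + 1 := by
  rw [numCycles_eq_card_filter_add_card_pair (by omega) (isAffinePerm_smulS hn hf i) i (i + 1),
    numCycles_eq_card_filter_add_card_pair (by omega) hf i (i + 1), filter_orbitSet_smulS hn hf]
  have := card_insert_le (orbitF n (smulS n i f) i) {orbitF n (smulS n i f) (i + 1)}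
  have := card_pos.2 ⟨_, mem_insert_self (orbitF n f i) {orbitF n f (i + 1)}⟩
  rw [card_singleton] at *
  omega

/-- Starting at `i`, `f s_i` jumps to `f (i + 1)` and then follows the `f`-cycle of `i + 1`
until it returns to `i + 1`. -/
theorem mem_orbitF_smulS_of_not_mem (hn : 2 ≤ n) (hf : IsAffinePerm n f)
    (h : i % n ∉ orbitF n f (i + 1)) : (i + 1) % n ∈ orbitF n (smulS n i f) i := by
  classical
  have hex : ∃ p, 0 < p ∧ f^[p] (i + 1) ≡ i + 1 [ZMOD n] := by
    obtain ⟨p, hp0, -, hp⟩ := hf.exists_iterate_modEq_self (by omega) (i + 1)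
    exact ⟨p, hp0, hp⟩
  obtain ⟨q, hq⟩ : ∃ q, Nat.find hex = q + 1 := Nat.exists_eq_add_one.2 (Nat.find_spec hex).1
  have hret := (Nat.find_spec hex).2
  rw [hq] at hret
  have hf' := isAffinePerm_smulS hn hf i
  refine (mem_orbitF_iff (by omega) hf').2 ⟨q + 1, ?_⟩
  rw [Function.iterate_succ_apply, show smulS n i f i = f (i + 1) from
    congrArg f (sT_of_modEq rfl)]
  refine (hf'.iterate_modEq_iterate fun s hs => ?_).trans hret
  rw [← Function.iterate_succ_apply, smulS_apply_of_not_modEq]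
  · exact fun h' => h ((mem_orbitF_iff (by omega) hf).2 ⟨s + 1, h'⟩)
  · exact fun h' => Nat.find_min hex (show s + 1 < Nat.find hex by omega) ⟨by omega, h'⟩

theorem numCycles_smulS_lt (hn : 2 ≤ n) (hf : IsAffinePerm n f)
    (h : i % n ∉ orbitF n f (i + 1)) : numCycles n (smulS n i f) < numCycles n f := by
  have hf' := isAffinePerm_smulS hn hf i
  have hpair : ({orbitF n f i, orbitF n f (i + 1)} : Finset _).card = 2 :=
    card_pair fun h' => h (h' ▸ mem_orbitF_self (by omega) i)
  rw [numCycles_eq_card_filter_add_card_pair (by omega) hf' i (i + 1),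
    numCycles_eq_card_filter_add_card_pair (by omega) hf i (i + 1), filter_orbitSet_smulS hn hf,
    orbitF_eq_of_mem (by omega) hf' (mem_orbitF_smulS_of_not_mem hn hf h), hpair]
  simp

end CycleCount

section Displacement

variable {σ : ℤ → ℤ}

noncomputable def displacement (n : ℕ) (f : ℤ → ℤ) : ℤ := ∑ i ∈ Icc (1 : ℤ) n, (f i - i)

/-- `σ` maps `[1, n]` onto a complete residue system modulo `n`. -/
theorem sum_Icc_comp_eq_sum (hn : 0 < n) (hσ : IsAffinePerm n σ) {g : ℤ → ℤ}
    (hg : Function.Periodic g n) :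
    ∑ i ∈ Icc (1 : ℤ) n, g (σ i) = ∑ i ∈ Icc (1 : ℤ) n, g i := by
  have hgrep : ∀ x, g (modIcc n x) = g x := fun x => by
    obtain ⟨t, ht⟩ := dvd_sub_modIcc (n := n) x
    have := hg.int_mul t (modIcc n x)
    rwa [Int.cast_id, show modIcc n x + t * n = x by linarith, eq_comm] at this
  have hmaps : Set.MapsTo (fun i => modIcc n (σ i)) (Icc (1 : ℤ) n : Set ℤ) (Icc (1 : ℤ) n) :=
    fun i _ => by simpa using modIcc_mem hn (σ i)
  have hinj : Set.InjOn (fun i => modIcc n (σ i)) (Icc (1 : ℤ) n : Set ℤ) := by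
    intro a ha b hb hab
    simp only [coe_Icc, Set.mem_Icc] at ha hb
    refine eq_of_modEq_of_lt (hσ.modEq_of_apply_modEq ?_) (by omega) (by omega)
    have hab : modIcc n (σ a) = modIcc n (σ b) := hab
    exact (modIcc_modEq (σ a)).symm.trans (hab ▸ modIcc_modEq (σ b))
  calc ∑ i ∈ Icc (1 : ℤ) n, g (σ i) = ∑ i ∈ Icc (1 : ℤ) n, g (modIcc n (σ i)) :=
        sum_congr rfl fun i _ => (hgrep _).symm
    _ = ∑ i ∈ Icc (1 : ℤ) n, g i :=
        sum_nbij _ (fun i hi => hmaps hi) hinj (surjOn_of_injOn_of_card_le _ hmaps hinj le_rfl)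
          fun _ _ => rfl

theorem displacement_comp (hn : 0 < n) (hσ : IsAffinePerm n σ)
    (hf : ∀ x, f (x + n) = f x + n) :
    displacement n (f ∘ σ) = displacement n f + displacement n σ := by
  have hper : Function.Periodic (fun x => f x - x) n := fun x => by simp only [hf]; ring
  unfold displacement
  rw [← sum_Icc_comp_eq_sum hn hσ hper, ← sum_add_distrib]
  exact sum_congr rfl fun i _ => by simp only [Function.comp_apply]; ring

theorem displacement_sT (hn : 2 ≤ n) (i : ℤ) : displacement n (sT n i) = 0 := by
  have := displacement_comp (by omega) (isAffinePerm_sT hn i) (isAffinePerm_sT hn i).2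
  rw [show sT n i ∘ sT n i = id from funext (sT_sT hn i),
    show displacement n id = 0 by simp [displacement]] at this
  linarith

theorem displacement_smulS (hn : 2 ≤ n) (hf : IsAffinePerm n f) (i : ℤ) :
    displacement n (smulS n i f) = displacement n f := by
  rw [show smulS n i f = f ∘ sT n i from rfl,
    displacement_comp (by omega) (isAffinePerm_sT hn i) hf.2, displacement_sT hn, add_zero]

theorem winding_mul_eq_displacement (hn : 0 < n) (hf : IsBAP n f) :
    (winding n f : ℤ) * n = displacement n f := by
  have hrep : ∀ i ∈ Icc (1 : ℤ) n,
      f i - i = (if (n : ℤ) < f i then (n : ℤ) else 0) + (modIcc n (f i) - i) := by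
    intro i hi
    rw [mem_Icc] at hi
    obtain ⟨h1, h2⟩ := hf.2 i
    split_ifs with h
    · rw [show f i = f i - n + n by ring, modIcc_add_self, modIcc_of_mem (by omega) (by omega)]
      ring
    · rw [modIcc_of_mem (by omega) (by omega)]
      ring
  have hsum : ∑ i ∈ Icc (1 : ℤ) n, (modIcc n (f i) - i) = 0 := by
    rw [sum_sub_distrib, sum_Icc_comp_eq_sum hn hf.1 fun x => modIcc_add_self x,
      sum_congr rfl fun i hi => modIcc_of_mem (mem_Icc.1 hi).1 (mem_Icc.1 hi).2, sub_self]
  rw [displacement, sum_congr rfl hrep, sum_add_distrib, hsum, add_zero, sum_ite, sum_const_zero,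
    add_zero, sum_const, nsmul_eq_mul, winding]

theorem winding_eq_of_displacement_eq (hn : 0 < n) (hf : IsBAP n f) (hg : IsBAP n g)
    (h : displacement n f = displacement n g) : winding n f = winding n g := by
  rw [← winding_mul_eq_displacement hn hf, ← winding_mul_eq_displacement hn hg] at h
  exact_mod_cast mul_right_cancel₀ (by positivity) h

end Displacement

section Inversions

variable {p q : ℤ}

theorem of_mem_inversions (h : (p, q) ∈ inversions n f) :
    (1 ≤ p ∧ p ≤ n) ∧ p < q ∧ f q < f p := by
  simp only [inversions, mem_filter, mem_product, mem_Icc] at h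
  exact ⟨h.1.1, h.2⟩

theorem mem_inversions_of_isBoundedFn (hB : IsBoundedFn n f) (hp : 1 ≤ p ∧ p ≤ n) (hpq : p < q)
    (hfpq : f q < f p) : (p, q) ∈ inversions n f := by
  have := (hB p).2
  have := (hB q).1
  simp only [inversions, mem_filter, mem_product, mem_Icc]
  exact ⟨⟨hp, by omega, by omega⟩, hpq, hfpq⟩

theorem modIcc_mem_inversions (hn : 0 < n) (hf : IsAffinePerm n f) (hB : IsBoundedFn n f)
    (hpq : p < q) (hfpq : f q < f p) : (modIcc n p, q - p + modIcc n p) ∈ inversions n f := by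
  have hd : (n : ℤ) ∣ modIcc n p - p := by simpa using (dvd_sub_modIcc (n := n) p).neg_right
  have h1 := hf.apply_eq_of_dvd hd
  have h2 := hf.apply_eq_of_dvd (x := q) (y := q - p + modIcc n p) (by convert hd using 1; ring)
  exact mem_inversions_of_isBoundedFn hB (modIcc_mem hn p) (by omega) (by omega)

/-- `(p, q) ↦ (s_i p, s_i q)`, translated so that the first entry lies in `[1, n]`, embeds the
inversions of `f s_i` into those of `f` other than `(i, i + 1)`. -/
theorem alen_smulS_lt (hn : 2 ≤ n) (hf : IsAffinePerm n f) (hB : IsBoundedFn n f) {i : ℤ}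
    (hi : 1 ≤ i ∧ i ≤ n) (hd : f (i + 1) < f i) : alen n (smulS n i f) < alen n f := by
  set ψ : ℤ × ℤ → ℤ × ℤ := fun pq =>
    (modIcc n (sT n i pq.1), sT n i pq.2 - sT n i pq.1 + modIcc n (sT n i pq.1)) with hψ
  have key : ∀ p q, (p, q) ∈ inversions n (smulS n i f) → sT n i p < sT n i q := by
    intro p q hpq
    obtain ⟨-, hpq, hfpq⟩ := of_mem_inversions hpq
    refine sT_lt_sT hn hpq fun ⟨hpi, hq⟩ => ?_
    subst hq
    have := hf.apply_add_one_sub_apply hpi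
    simp only [smulS, sT_of_modEq hpi, sT_add_one_of_modEq hn hpi] at hfpq
    omega
  have hmaps : Set.MapsTo ψ (inversions n (smulS n i f) : Set (ℤ × ℤ))
      ((inversions n f).erase (i, i + 1) : Set (ℤ × ℤ)) := by
    rintro ⟨p, q⟩ hpq
    have hfpq := (of_mem_inversions hpq).2.2
    refine mem_erase.2 ⟨fun h => ?_, modIcc_mem_inversions (by omega) hf hB (key p q hpq) hfpq⟩
    simp only [hψ, Prod.mk.injEq] at h
    have hu : sT n i p ≡ i [ZMOD n] := (modIcc_modEq (sT n i p)).symm.trans (by rw [h.1])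
    have hp := sT_sT hn i p
    have hq := sT_sT hn i q
    rw [sT_of_modEq hu] at hp
    rw [show sT n i q = sT n i p + 1 by omega, sT_add_one_of_modEq hn hu] at hq
    have := (of_mem_inversions hpq).2.1
    omega
  have hinj : Set.InjOn ψ (inversions n (smulS n i f) : Set (ℤ × ℤ)) := by
    rintro ⟨p, q⟩ hpq ⟨p', q'⟩ hpq' h
    simp only [hψ, Prod.mk.injEq] at h
    have hpp : p = p' := by
      have hmod := (modIcc_modEq (sT n i p)).symm.trans (h.1 ▸ modIcc_modEq (sT n i p'))
      have := (of_mem_inversions hpq).1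
      have := (of_mem_inversions hpq').1
      exact eq_of_modEq_of_lt ((isAffinePerm_sT hn i).modEq_of_apply_modEq hmod) (by omega)
        (by omega)
    subst hpp
    exact Prod.ext rfl ((isAffinePerm_sT hn i).1.1 (show sT n i q = sT n i q' by omega))
  calc alen n (smulS n i f) ≤ ((inversions n f).erase (i, i + 1)).card :=
        card_le_card_of_injOn ψ hmaps hinj
    _ < alen n f :=
        card_erase_lt_of_mem (mem_inversions_of_isBoundedFn hB hi (by omega) hd)

end Inversions

section Descents

variable {i : ℤ}

theorem isBoundedFn_smulS (hf : IsAffinePerm n f) (hB : IsBoundedFn n f)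
    (hd : f (i + 1) < f i) : IsBoundedFn n (smulS n i f) := by
  intro m
  rcases sT_cases (n := n) i m with ⟨h, hs⟩ | ⟨-, h, hs⟩ | ⟨-, -, hs⟩ <;>
    simp only [smulS, hs]
  · have := hf.apply_add_one_sub_apply h
    have := (hB (m + 1)).1
    have := (hB m).2
    omega
  · have := hf.apply_add_one_sub_apply (j := m - 1) (i := i)
      (Int.ModEq.add_right_cancel' 1 (by rwa [sub_add_cancel]))
    rw [sub_add_cancel] at this
    have := (hB (m - 1)).2
    have := (hB m).1
    omega
  · exact hB m

theorem IsAffinePerm.eq_add_const_of_forall_lt (hn : 0 < n) (hf : IsAffinePerm n f)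
    (h : ∀ i : ℤ, 1 ≤ i → i ≤ n → f i < f (i + 1)) : ∀ j, f j = j + f 0 := by
  have hstep : ∀ j, f j < f (j + 1) := fun j => by
    have := hf.apply_add_one_sub_apply (modIcc_modEq (n := n) j).symm
    have := h _ (modIcc_mem hn j).1 (modIcc_mem hn j).2
    omega
  have hmono : Monotone fun j => f j - j :=
    monotone_int_of_le_succ fun j => by have := hstep j; omega
  have hconst : ∀ j, f (j + 1) - (j + 1) = f j - j := fun j => by
    have h1 := hmono (show j ≤ j + 1 by omega)
    have h2 := hmono (show j + 1 ≤ j + n by omega)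
    simp only [hf.2] at h1 h2
    omega
  intro j
  induction j using Int.induction_on with
  | zero => simp
  | succ j ih => have := hconst j; omega
  | pred j ih => have := hconst (-j - 1); simp only [sub_add_cancel] at this; omega

theorem eq_add_winding_of_forall_lt (hn : 0 < n) (hf : IsBAP n f)
    (h : ∀ i : ℤ, 1 ≤ i → i ≤ n → f i < f (i + 1)) : f = (· + (winding n f : ℤ)) := by
  have htr := hf.1.eq_add_const_of_forall_lt hn h
  have hw := winding_mul_eq_displacement hn hf
  rw [displacement, sum_congr rfl fun j _ => show f j - j = f 0 by rw [htr j]; ring, sum_const,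
    Int.card_Icc, add_sub_cancel_right, Int.toNat_natCast, nsmul_eq_mul] at hw
  have : (winding n f : ℤ) = f 0 := by
    refine mul_right_cancel₀ (show (n : ℤ) ≠ 0 by omega) ?_
    rw [hw, mul_comm]
  funext j
  rw [htr j, this]

end Descents

section Translation

theorem mem_orbitF_add_const_iff (hn : 0 < n) (k : ℕ) {x y : ℤ} :
    y % n ∈ orbitF n (· + (k : ℤ)) x ↔ x ≡ y [ZMOD Nat.gcd k n] := by
  have hdn : (Nat.gcd k n : ℤ) ∣ n := Int.natCast_dvd_natCast.2 (Nat.gcd_dvd_right k n)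
  have hdk : (Nat.gcd k n : ℤ) ∣ k := Int.natCast_dvd_natCast.2 (Nat.gcd_dvd_left k n)
  rw [mem_orbitF_iff hn (isAffinePerm_add_const _)]
  simp only [add_right_iterate, Int.nsmul_eq_mul]
  constructor
  · rintro ⟨r, hr⟩
    exact (Int.modEq_iff_dvd.2 (by simpa using hdk.mul_left r)).trans (Int.ModEq.of_dvd hdn hr)
  · intro h
    obtain ⟨m, hm⟩ := h.dvd
    have hb := Nat.gcd_eq_gcd_ab k n
    refine ⟨((k.gcdA n * m) % n).toNat, ?_⟩
    rw [Int.toNat_of_nonneg (Int.emod_nonneg _ (by omega))]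
    refine (((Int.mod_modEq _ _).mul_right k).add_left x).trans (Int.modEq_iff_dvd.2 ?_)
    exact ⟨k.gcdB n * m, by linear_combination hm + m * hb⟩

theorem numCycles_add_const (hn : 0 < n) (k : ℕ) : numCycles n (· + (k : ℤ)) = Nat.gcd k n := by
  set d := Nat.gcd k n with hd
  have hT := isAffinePerm_add_const (n := n) (k : ℤ)
  have hd0 : 0 < d := Nat.gcd_pos_of_pos_right k hn
  have hdn : d ≤ n := Nat.le_of_dvd hn (Nat.gcd_dvd_right k n)
  have hset : orbitSet n (· + (k : ℤ)) = (range d).image fun a : ℕ => orbitF n (· + (k : ℤ)) a := by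
    ext O
    rw [mem_orbitSet_iff hn hT, mem_image]
    constructor
    · rintro ⟨x, rfl⟩
      have h0 := Int.emod_nonneg x (b := d) (by omega)
      have h1 := Int.emod_lt_of_pos x (b := d) (by omega)
      refine ⟨(x % d).toNat, mem_range.2 (by omega),
        orbitF_eq_of_mem hn hT ((mem_orbitF_add_const_iff hn k).2 ?_)⟩
      rw [Int.toNat_of_nonneg h0]
      exact (Int.mod_modEq x d).symm
    · rintro ⟨a, -, rfl⟩
      exact ⟨a, rfl⟩
  rw [numCycles_eq_card_orbitSet, hset, card_image_of_injOn, card_range]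
  intro a ha b hb hab
  have hab : orbitF n (· + (k : ℤ)) a = orbitF n (· + (k : ℤ)) b := hab
  have := (mem_orbitF_add_const_iff hn k).1 (hab ▸ mem_orbitF_self hn (b : ℤ))
  exact Nat.ModEq.eq_of_lt_of_lt (Int.natCast_modEq_iff.1 this) (mem_range.1 ha) (mem_range.1 hb)

end Translation

theorem gcd_winding_le_alen_add_numCycles (hn : 2 ≤ n) {f : ℤ → ℤ} (hf : IsBAP n f) :
    Nat.gcd (winding n f) n ≤ alen n f + numCycles n f := by
  induction h : alen n f using Nat.strong_induction_on generalizing f with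
  | _ N ih =>
  by_cases hdesc : ∃ i : ℤ, (1 ≤ i ∧ i ≤ n) ∧ f (i + 1) < f i
  · obtain ⟨i, hi, hd⟩ := hdesc
    have hf' : IsBAP n (smulS n i f) :=
      ⟨isAffinePerm_smulS hn hf.1 i, isBoundedFn_smulS hf.1 hf.2 hd⟩
    have hlt := h ▸ alen_smulS_lt hn hf.1 hf.2 hi hd
    have := ih _ hlt hf' rfl
    rw [winding_eq_of_displacement_eq (by omega) hf' hf (displacement_smulS hn hf.1 i)] at this
    have := numCycles_smulS_le hn hf.1 i
    omega
  · simp only [not_exists, not_and, not_lt] at hdesc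
    have hT := eq_add_winding_of_forall_lt (by omega) hf fun i h1 h2 =>
      (hdesc i ⟨h1, h2⟩).lt_of_ne fun h' => by have := hf.1.1.1 h'; omega
    have := numCycles_add_const (n := n) (by omega) (winding n f)
    rw [← hT] at this
    omega

section MinimalElement

variable {k t : ℕ}

theorem sChain_apply (ht : t + 2 ≤ n) (m : ℤ) :
    sChain n t m = if 1 ≤ m % n ∧ m % n ≤ t then m + 1
      else if m % n = t + 1 then m - t else m := by
  have h0 := Int.emod_nonneg m (b := n) (by omega)
  have h1 := Int.emod_lt_of_pos m (b := n) (by omega)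
  induction t generalizing m with
  | zero => simp only [sChain, id]; split_ifs <;> omega
  | succ t ih =>
    have ih := fun m => ih (by omega) m (Int.emod_nonneg m (b := n) (by omega))
      (Int.emod_lt_of_pos m (by omega))
    have hi : ((t : ℤ) + 1) % n = t + 1 := Int.emod_eq_of_lt (by omega) (by omega)
    have hi' : ((t : ℤ) + 1 + 1) % n = t + 2 := Int.emod_eq_of_lt (by omega) (by omega)
    show sChain n t (sT n ((t : ℤ) + 1) m) = _
    rcases sT_cases (n := n) ((t : ℤ) + 1) m with ⟨h, hs⟩ | ⟨-, h, hs⟩ | ⟨ha, hb, hs⟩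
    · have h' : m % n = t + 1 := h.eq.trans hi
      rw [hs, ih, emod_add_eq_of_emod_eq h' (by omega) (by omega), h']
      split_ifs <;> omega
    · have h' : m % n = t + 2 := h.eq.trans hi'
      rw [hs, ih, show m - 1 = m + -1 by ring, emod_add_eq_of_emod_eq h' (by omega) (by omega), h']
      split_ifs <;> omega
    · have ha' : m % n ≠ t + 1 := fun h => ha (h.trans hi.symm)
      have hb' : m % n ≠ t + 2 := fun h => hb (h.trans hi'.symm)
      rw [hs, ih]
      split_ifs <;> omega

theorem isAffinePerm_sChain (hn : 2 ≤ n) : ∀ t, IsAffinePerm n (sChain n t)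
  | 0 => ⟨Function.bijective_id, fun _ => rfl⟩
  | t + 1 => (isAffinePerm_sChain hn t).comp (isAffinePerm_sT hn _)

theorem displacement_sChain (hn : 2 ≤ n) : ∀ t, displacement n (sChain n t) = 0
  | 0 => by simp [displacement, sChain]
  | t + 1 => by
    rw [show sChain n (t + 1) = sChain n t ∘ sT n ((t : ℤ) + 1) from rfl,
      displacement_comp (by omega) (isAffinePerm_sT hn _) (isAffinePerm_sChain hn t).2,
      displacement_sChain hn t, displacement_sT hn, add_zero]

def shiftChain (n k t : ℕ) : ℤ → ℤ := fun m => sChain n t m + (k : ℤ)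

theorem shiftChain_apply (ht : t + 2 ≤ n) (m : ℤ) :
    shiftChain n k t m = m + k + if 1 ≤ m % n ∧ m % n ≤ t then 1
      else if m % n = t + 1 then -(t : ℤ) else 0 := by
  rw [shiftChain, sChain_apply ht]
  split_ifs <;> ring

theorem isBAP_shiftChain (hn : 2 ≤ n) (htk : t < k) (hkn : k < n) : IsBAP n (shiftChain n k t) := by
  refine ⟨(isAffinePerm_add_const (k : ℤ)).comp (isAffinePerm_sChain hn t), fun m => ?_⟩
  rw [shiftChain_apply (by omega)]
  split_ifs <;> omega

theorem winding_shiftChain (hn : 2 ≤ n) (htk : t < k) (hkn : k < n) :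
    winding n (shiftChain n k t) = k := by
  have h := winding_mul_eq_displacement (by omega) (isBAP_shiftChain hn htk hkn)
  rw [show shiftChain n k t = (· + (k : ℤ)) ∘ sChain n t from rfl,
    displacement_comp (by omega) (isAffinePerm_sChain hn t) fun x => by ring,
    displacement_sChain hn t, add_zero, displacement] at h
  simp only [add_sub_cancel_left, sum_const, Int.card_Icc, add_sub_cancel_right,
    Int.toNat_natCast, nsmul_eq_mul] at h
  exact_mod_cast mul_right_cancel₀ (show (n : ℤ) ≠ 0 by omega) (h.trans (mul_comm _ _))

theorem inversions_shiftChain_subset (ht : t + 2 ≤ n) :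
    inversions n (shiftChain n k t) ⊆ (Icc (1 : ℤ) t).image fun p => (p, (t : ℤ) + 1) := by
  rintro ⟨p, q⟩ hpq
  obtain ⟨⟨hp1, hp2⟩, hlt, hg⟩ := of_mem_inversions hpq
  have hq : q % n = t + 1 → q < p + t + 1 → q = t + 1 := fun h h' =>
    eq_of_modEq_of_lt (h.trans (Int.emod_eq_of_lt (by omega) (by omega)).symm) (by omega)
      (by omega)
  have key : p ≤ t ∧ q = t + 1 := by
    rw [shiftChain_apply ht, shiftChain_apply ht] at hg
    split_ifs at hg <;> omega
  exact mem_image.2 ⟨p, mem_Icc.2 ⟨hp1, key.1⟩, by rw [key.2]⟩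

theorem alen_shiftChain_le (ht : t + 2 ≤ n) : alen n (shiftChain n k t) ≤ t := by
  have := card_le_card (inversions_shiftChain_subset (k := k) ht)
  rwa [card_image_of_injective _ fun a b h => (Prod.ext_iff.1 h).1, Int.card_Icc,
    add_sub_cancel_right, Int.toNat_natCast] at this

end MinimalElement

section MinimalCycle

variable {k : ℕ}

/-- The `f_{k,n}`-cycle of `t + 2` is a class modulo `gcd k n`, so it avoids the residues
`1, …, t + 1` moved by `s_1 ⋯ s_t`. -/
theorem orbitF_shiftChain (hk : 1 ≤ k) (hkn : k < n) {t : ℕ} (ht : t + 2 ≤ Nat.gcd k n) :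
    orbitF n (shiftChain n k t) (t + 2) = orbitF n (· + (k : ℤ)) (t + 2) := by
  set d := Nat.gcd k n
  have hdk : d ≤ k := Nat.le_of_dvd (by omega) (Nat.gcd_dvd_left k n)
  have hdn : (d : ℤ) ∣ n := Int.natCast_dvd_natCast.2 (Nat.gcd_dvd_right k n)
  have hdk' : (d : ℤ) ∣ k := Int.natCast_dvd_natCast.2 (Nat.gcd_dvd_left k n)
  refine orbitF_eq_of_forall_modEq (isBAP_shiftChain (by omega) (by omega) hkn).1 fun r => ?_
  simp only [add_right_iterate, Int.nsmul_eq_mul]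
  set y := (t : ℤ) + 2 + r * k
  have hy : y % n ≡ t + 2 [ZMOD d] := by
    refine (Int.emod_emod_of_dvd y hdn).trans (Int.modEq_iff_dvd.2 ?_)
    rw [show (t : ℤ) + 2 - y = -(r * k) by ring]
    exact (hdk'.mul_left _).neg_right
  have hy' : ¬ (1 ≤ y % n ∧ y % n ≤ t + 1) := fun ⟨h1, h2⟩ => by
    have := Int.le_of_dvd (by omega) hy.dvd
    omega
  rw [shiftChain_apply (by omega)]
  split_ifs <;> first | omega | simp

theorem numCycles_shiftChain_add_le (hk : 1 ≤ k) (hkn : k < n) :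
    ∀ t, t + 1 ≤ Nat.gcd k n → numCycles n (shiftChain n k t) + t ≤ Nat.gcd k n
  | 0, _ => by
    rw [show shiftChain n k 0 = (· + (k : ℤ)) from rfl, numCycles_add_const (by omega)]
    omega
  | t + 1, ht => by
    have ih := numCycles_shiftChain_add_le hk hkn t (by omega)
    have hdk : Nat.gcd k n ≤ k := Nat.le_of_dvd (by omega) (Nat.gcd_dvd_left k n)
    have hsep : ((t : ℤ) + 1) % n ∉ orbitF n (shiftChain n k t) ((t : ℤ) + 1 + 1) := by
      rw [show (t : ℤ) + 1 + 1 = t + 2 by ring, orbitF_shiftChain hk hkn ht,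
        mem_orbitF_add_const_iff (by omega)]
      intro h
      have := Int.le_of_dvd one_pos (by simpa using h.dvd)
      omega
    have := numCycles_smulS_lt (by omega)
      (isBAP_shiftChain (t := t) (by omega) (by omega) hkn).1 hsep
    rw [show shiftChain n k (t + 1) = smulS n ((t : ℤ) + 1) (shiftChain n k t) from rfl]
    omega

end MinimalCycle

/-- Every `f ∈ Θ_{k,n}` has `ℓ(f) ≥ gcd(k,n) - 1`, and the bound is attained
by `f_{k,n} s_1 s_2 ⋯ s_{gcd(k,n)-1} ∈ Θ_{k,n}`, where `f_{k,n}(i) = i + k`. -/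
theorem positroid_stmt5 (k n : ℕ) (hk : 1 ≤ k) (hkn : k < n) :
    (∀ f : ℤ → ℤ, IsTheta k n f → Nat.gcd k n - 1 ≤ alen n f) ∧
    IsTheta k n (fun m => sChain n (Nat.gcd k n - 1) m + (k : ℤ)) ∧
    alen n (fun m => sChain n (Nat.gcd k n - 1) m + (k : ℤ)) = Nat.gcd k n - 1 := by
  have hn : 2 ≤ n := by omega
  have hd : 1 ≤ Nat.gcd k n ∧ Nat.gcd k n ≤ k :=
    ⟨Nat.gcd_pos_of_pos_left n hk, Nat.le_of_dvd hk (Nat.gcd_dvd_left k n)⟩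
  have lower : ∀ f : ℤ → ℤ, IsTheta k n f → Nat.gcd k n - 1 ≤ alen n f := by
    rintro f ⟨hf, hcyc, rfl⟩
    have := gcd_winding_le_alen_add_numCycles hn hf
    have := (isCycleMod_iff_numCycles_le_one (by omega) hf.1).1 hcyc
    omega
  have hBAP := isBAP_shiftChain (t := Nat.gcd k n - 1) hn (by omega) hkn
  have hmin : IsTheta k n (shiftChain n k (Nat.gcd k n - 1)) := by
    refine ⟨hBAP, (isCycleMod_iff_numCycles_le_one (by omega) hBAP.1).2 ?_,
      winding_shiftChain hn (by omega) hkn⟩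
    have := numCycles_shiftChain_add_le hk hkn (Nat.gcd k n - 1) (by omega)
    omega
  exact ⟨lower, hmin, le_antisymm (alen_shiftChain_le (by omega)) (lower _ hmin)⟩
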